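/- arXiv:1610.01930 — 3 statements merged into one kernel-verified Lean document; each statement's English description precedes it below -/
import Mathlib

section
/- Let ℬ and 𝒜 be abelian categories and n ≥ 1. For every functor F : ℬ ⥤ 𝒜 the n-th cross effect cr_nF is strictly multi-reduced (cr_nF(X₁,…,Xₙ) is a zero object whenever some Xᵢ is a zero object), and the resulting functor cr_n : Fun(ℬ,𝒜) → Fun_*(ℬ^n,𝒜) is right adjoint to the functor Δ* : Fun_*(ℬ^n,𝒜) → Fun(ℬ,𝒜) given by precomposition with the diagonal Δ : ℬ → ℬ^n, where Fun_*(ℬ^n,𝒜) denotes the full subcategory of Fun(ℬ^n,𝒜) spanned by the strictly multi-reduced functors. -/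
open CategoryTheory CategoryTheory.Limits ZeroObject
attribute [local instance] CategoryTheory.Abelian.hasFiniteBiproducts
universe v u v' u'
variable {B : Type u} [Category.{v} B] [Abelian B]
variable {A : Type u'} [Category.{v'} A] [Abelian A]

noncomputable def collapse {n : ℕ} (X : Fin (n + 1) → B) (j : Fin (n + 1)) :
    (⨁ X) ⟶ ⨁ (X ∘ j.succAbove) :=
  biproduct.lift fun k => biproduct.π X (j.succAbove k)

noncomputable def crObj (n : ℕ) (F : B ⥤ A) (X : Fin (n + 1) → B) : A :=
  kernel (biproduct.lift fun j : Fin (n + 1) => F.map (collapse X j))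

noncomputable def crObjMapObj (n : ℕ) (F : B ⥤ A) {X Y : Fin (n + 1) → B}
    (f : ∀ i, X i ⟶ Y i) : crObj n F X ⟶ crObj n F Y :=
  kernel.map _ _ (F.map (biproduct.map f))
    (biproduct.map fun j => F.map (biproduct.map fun k => f (j.succAbove k)))
    (by
      ext j
      simp only [Category.assoc, biproduct.lift_π, biproduct.map_π, biproduct.lift_π_assoc,
        ← F.map_comp]
      congr 1
      ext k
      simp [collapse])

noncomputable def crN (n : ℕ) (F : B ⥤ A) : (Fin (n + 1) → B) ⥤ A where
  obj X := crObj n F X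
  map {X Y} f := crObjMapObj n F f
  map_id X := by
    refine (cancel_mono (kernel.ι (biproduct.lift fun j : Fin (n + 1) => F.map (collapse X j)))).1 ?_
    have h1 : biproduct.map (𝟙 X : ∀ i, X i ⟶ X i) = 𝟙 (⨁ X) := by
      ext; simp [CategoryTheory.Pi.id_apply]
    simp [crObjMapObj, crObj, kernel.map, h1]
  map_comp {X Y Z} f g := by
    refine (cancel_mono (kernel.ι (biproduct.lift fun j : Fin (n + 1) => F.map (collapse Z j)))).1 ?_
    have h1 : biproduct.map (f ≫ g : ∀ i, X i ⟶ Z i) = biproduct.map f ≫ biproduct.map g := by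
      ext; simp [CategoryTheory.Pi.comp_apply]
    simp [crObjMapObj, crObj, kernel.map, h1]

/-- the diagonal functor `ℬ ⥤ ℬ^{n+1}`. -/
def diagF (n : ℕ) : B ⥤ (Fin (n + 1) → B) := Functor.pi' fun _ => 𝟭 B

/-- the counit `Δ*(cr_{n+1} G) ⟶ G` of the adjunction `Δ* ⊣ cr_{n+1}`, whose component at `X`
is the kernel inclusion followed by `G` applied to the fold map. -/
noncomputable def crCounit (n : ℕ) (G : B ⥤ A) : diagF n ⋙ crN n G ⟶ G where
  app X := kernel.ι _ ≫ G.map (biproduct.desc fun _ : Fin (n + 1) => 𝟙 X)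
  naturality X Y f := by
    have h : biproduct.map (fun _ : Fin (n+1) => f) ≫ (biproduct.desc fun _ : Fin (n + 1) => 𝟙 Y)
        = (biproduct.desc fun _ : Fin (n + 1) => 𝟙 X) ≫ f := by ext; simp
    show crObjMapObj n G (fun _ => f) ≫ (kernel.ι _ ≫ G.map _) = (kernel.ι _ ≫ G.map _) ≫ G.map f
    simp only [crObjMapObj, kernel.map, kernel.lift_ι_assoc, Category.assoc, ← G.map_comp]
    erw [kernel.lift_ι_assoc]
    exact (Category.assoc _ _ _).trans
      (congrArg (fun t => kernel.ι (biproduct.lift fun j => G.map (collapse (fun _ => X) j)) ≫ t)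
        ((G.map_comp _ _).symm.trans ((congrArg G.map h).trans (G.map_comp _ _))))

/-! If `X i` is zero, the collapse map `⨁ X ⟶ ⨁ (X ∘ i.succAbove)` is an isomorphism, so the map
whose kernel defines the cross effect is a monomorphism and the kernel vanishes.

For the adjunction, the transpose of `α : Δ* H ⟶ G` at `X` is `H X ⟶ H (Δ (⨁ X)) ⟶ G (⨁ X)`, the
first map being `H` of the biproduct inclusions. By naturality of `α`, its composite with
`G (collapse X j)` is `H` of a morphism whose `j`-th component `ι_j ≫ collapse_j` vanishes, and a
strictly multi-reduced functor kills such morphisms since they factor through a family with a zero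
entry; so the transpose lands in the cross effect. The triangle identity is `fold ∘ ι_i = 𝟙`, and
uniqueness holds because `cr(ι) ≫ counit` is the kernel inclusion. -/

def IsStrictlyMultiReduced {ι C D : Type*} [Category C] [Category D] (H : (ι → C) ⥤ D) : Prop :=
  ∀ X : ι → C, (∃ i, IsZero (X i)) → IsZero (H.obj X)

lemma IsStrictlyMultiReduced.map_eq_zero {ι C D : Type*} [Category C] [Category D]
    [HasZeroObject C] [HasZeroMorphisms C] [HasZeroMorphisms D] {H : (ι → C) ⥤ D}
    (hH : IsStrictlyMultiReduced H) {X Y : ι → C} (f : X ⟶ Y) (j : ι) (hf : f j = 0) :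
    H.map f = 0 := by
  classical
  let X' : ι → C := Function.update X j 0
  have hX' : ∀ i, i ≠ j → X' i = X i := fun i hi => Function.update_of_ne hi 0 X
  let g : X ⟶ X' := fun i => if h : i = j then 0 else eqToHom (hX' i h).symm
  let k : X' ⟶ Y := fun i => if h : i = j then 0 else eqToHom (hX' i h) ≫ f i
  have hfactor : f = g ≫ k := by
    funext i
    by_cases h : i = j
    · subst h
      simp [g, k, hf]
    · simp [g, k, h]
  have hzero : IsZero (H.obj X') := hH X' ⟨j, by simpa [X'] using isZero_zero C⟩
  rw [hfactor, H.map_comp, hzero.eq_of_tgt (H.map g) 0, zero_comp]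

section CrossEffect

variable {n : ℕ}

lemma ι_collapse_self (X : Fin (n + 1) → B) (j : Fin (n + 1)) :
    biproduct.ι X j ≫ collapse X j = 0 := by
  ext k
  simp [collapse, biproduct.ι_π_ne _ (Fin.ne_succAbove j k)]

lemma isIso_collapse_of_isZero {X : Fin (n + 1) → B} {j : Fin (n + 1)} (h : IsZero (X j)) :
    IsIso (collapse X j) := by
  refine ⟨biproduct.desc fun k => biproduct.ι X (j.succAbove k), ?_, ?_⟩
  · rw [collapse, biproduct.lift_desc, ← biproduct.total,
      Fin.sum_univ_succAbove (fun m => biproduct.π X m ≫ biproduct.ι X m) j]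
    simp [h.eq_of_tgt (biproduct.π X j) 0]
  · ext k k'
    by_cases hk : k = k'
    · subst hk
      simp [collapse]
    · simp [collapse, biproduct.ι_π_ne _ (Fin.succAbove_right_injective.ne (Ne.symm hk)),
        biproduct.ι_π_ne _ (Ne.symm hk)]

namespace crN

noncomputable def ι (F : B ⥤ A) (X : Fin (n + 1) → B) : (crN n F).obj X ⟶ F.obj (⨁ X) :=
  kernel.ι _

instance (F : B ⥤ A) (X : Fin (n + 1) → B) : Mono (ι F X) :=
  inferInstanceAs (Mono (kernel.ι _))

noncomputable def lift (F : B ⥤ A) {X : Fin (n + 1) → B} {W : A} (g : W ⟶ F.obj (⨁ X))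
    (hg : ∀ j, g ≫ F.map (collapse X j) = 0) : W ⟶ (crN n F).obj X :=
  kernel.lift _ g (by ext j; simpa using hg j)

@[simp]
lemma lift_ι (F : B ⥤ A) {X : Fin (n + 1) → B} {W : A} (g : W ⟶ F.obj (⨁ X))
    (hg : ∀ j, g ≫ F.map (collapse X j) = 0) : lift F g hg ≫ ι F X = g :=
  kernel.lift_ι _ _ _

@[simp]
lemma map_ι (F : B ⥤ A) {X Y : Fin (n + 1) → B} (f : X ⟶ Y) :
    (crN n F).map f ≫ ι F Y = ι F X ≫ F.map (biproduct.map f) :=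
  kernel.lift_ι _ _ _

end crN

lemma crN_isStrictlyMultiReduced (F : B ⥤ A) : IsStrictlyMultiReduced (crN n F) := by
  rintro X ⟨i, hi⟩
  let d := biproduct.lift fun j => F.map (collapse X j)
  have := isIso_collapse_of_isZero hi
  have : Mono (d ≫ biproduct.π _ i) := by
    rw [biproduct.lift_π]
    infer_instance
  have : Mono d := mono_of_mono d (biproduct.π _ i)
  exact (isZero_zero A).of_iso (kernel.ofMono _)

noncomputable def toDiagBiproduct (X : Fin (n + 1) → B) : X ⟶ (diagF n).obj (⨁ X) :=
  fun i => biproduct.ι X i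

lemma toDiagBiproduct_diagF_map_fold (X : B) :
    toDiagBiproduct ((diagF n).obj X) ≫
      (diagF n).map (biproduct.desc fun _ : Fin (n + 1) => 𝟙 X) = 𝟙 _ := by
  funext i
  exact biproduct.ι_desc _ i

lemma crN_map_toDiagBiproduct_comp_crCounit (G : B ⥤ A) (X : Fin (n + 1) → B) :
    (crN n G).map (toDiagBiproduct X) ≫ (crCounit n G).app (⨁ X) = crN.ι G X := by
  have hfold : biproduct.map (toDiagBiproduct X) ≫
      biproduct.desc (fun _ : Fin (n + 1) => 𝟙 (⨁ X)) = 𝟙 (⨁ X) := by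
    refine biproduct.hom_ext' _ _ fun j => ?_
    rw [biproduct.ι_map_assoc]
    erw [biproduct.ι_desc, Category.comp_id]
  change _ ≫ crN.ι G _ ≫ _ = _
  rw [← Category.assoc, crN.map_ι, Category.assoc, ← G.map_comp, hfold, G.map_id, Category.comp_id]

variable {G : B ⥤ A} {H : (Fin (n + 1) → B) ⥤ A}

noncomputable def crLift (hH : IsStrictlyMultiReduced H) (α : diagF n ⋙ H ⟶ G) :
    H ⟶ crN n G where
  app X := crN.lift G (H.map (toDiagBiproduct X) ≫ α.app (⨁ X)) fun j => by
    rw [Category.assoc, ← α.naturality, Functor.comp_map, ← H.map_comp_assoc,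
      hH.map_eq_zero _ j (ι_collapse_self X j), zero_comp]
  naturality X Y f := by
    rw [← cancel_mono (crN.ι G Y)]
    simp only [Category.assoc, crN.lift_ι, crN.map_ι]
    rw [← Category.assoc (crN.lift _ _ _), crN.lift_ι, Category.assoc, ← α.naturality,
      Functor.comp_map, ← H.map_comp_assoc, ← H.map_comp_assoc]
    congr 2
    funext i
    exact (biproduct.ι_map f i).symm

lemma crLift_app_ι (hH : IsStrictlyMultiReduced H) (α : diagF n ⋙ H ⟶ G) (X : Fin (n + 1) → B) :
    (crLift hH α).app X ≫ crN.ι G X = H.map (toDiagBiproduct X) ≫ α.app (⨁ X) := by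
  simp [crLift]

lemma whiskerLeft_crLift_comp_crCounit (hH : IsStrictlyMultiReduced H) (α : diagF n ⋙ H ⟶ G) :
    Functor.whiskerLeft (diagF n) (crLift hH α) ≫ crCounit n G = α := by
  ext X
  change (crLift hH α).app _ ≫ crN.ι G _ ≫ _ = _
  rw [← Category.assoc, crLift_app_ι, Category.assoc, ← α.naturality, Functor.comp_map,
    ← H.map_comp_assoc, toDiagBiproduct_diagF_map_fold, H.map_id, Category.id_comp]

lemma eq_crLift (hH : IsStrictlyMultiReduced H) {α : diagF n ⋙ H ⟶ G} {β : H ⟶ crN n G}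
    (hβ : Functor.whiskerLeft (diagF n) β ≫ crCounit n G = α) : β = crLift hH α := by
  ext X
  rw [← cancel_mono (crN.ι G X), crLift_app_ι, ← hβ, ← crN_map_toDiagBiproduct_comp_crCounit,
    NatTrans.comp_app, Functor.whiskerLeft_app, ← β.naturality_assoc]

end CrossEffect

/-- For every `n ≥ 1` (here the arity is `n + 1`): the `(n+1)`-st cross effect
`cr_{n+1} F` of any functor `F : ℬ ⥤ 𝒜` is strictly multi-reduced (it vanishes as soon as one of
its arguments is a zero object), and the resulting functor `cr_{n+1}` from functors `ℬ ⥤ 𝒜` to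
strictly multi-reduced functors `ℬ^{n+1} ⥤ 𝒜` is right adjoint to precomposition with the
diagonal `Δ : ℬ ⥤ ℬ^{n+1}`: the canonical counit `crCounit` (kernel inclusion followed by the
fold map) exhibits, for every `G : ℬ ⥤ 𝒜`, unique factorizations of natural transformations
`Δ* H ⟶ G` with `H` strictly multi-reduced through `H ⟶ cr_{n+1} G`. -/
theorem crN_multireduced_and_adjoint_to_diagonal (n : ℕ) :
    (∀ (F : B ⥤ A) (Xs : Fin (n + 1) → B),
      (∃ i, IsZero (Xs i)) → IsZero ((crN n F).obj Xs)) ∧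
    (∀ (G : B ⥤ A) (H : (Fin (n + 1) → B) ⥤ A),
      (∀ Xs : Fin (n + 1) → B, (∃ i, IsZero (Xs i)) → IsZero (H.obj Xs)) →
      ∀ α : diagF n ⋙ H ⟶ G,
        ∃! β : H ⟶ crN n G, Functor.whiskerLeft (diagF n) β ≫ crCounit n G = α) :=
  ⟨fun F => crN_isStrictlyMultiReduced F, fun _ _ hH α =>
    ⟨crLift hH α, whiskerLeft_crLift_comp_crCounit hH α, fun _ hβ => eq_crLift hH hβ⟩⟩
end

section
/- Let ℬ and 𝒜 be abelian categories and n ≥ 1. The n-th cross effect is exact: if F → G → H are natural transformations between functors ℬ ⥤ 𝒜 forming an objectwise short exact sequence 0 → F(X) → G(X) → H(X) → 0 for every X, then for every tuple (X₁,…,Xₙ) of objects of ℬ the induced sequence 0 → cr_nF(X₁,…,Xₙ) → cr_nG(X₁,…,Xₙ) → cr_nH(X₁,…,Xₙ) → 0 is short exact in 𝒜. In particular the diagonal functor C_nF(X) := cr_nF(X,…,X) is exact in F. -/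
/-!
Statement 4: For abelian categories ℬ, 𝒜 and `n ≥ 1`, the `n`-th cross effect is exact:
an objectwise short exact sequence `0 → F → G → H → 0` of functors `ℬ ⥤ 𝒜` induces, for
every tuple of objects, a short exact sequence of `n`-th cross effects.  In particular the
diagonal `C_n F (X) := cr_n F (X,…,X)` is exact in `F`.

Here `crObj n F` denotes the `(n+1)`-st cross effect of `F` (so as `n` ranges over `ℕ` the
arity ranges over all integers `≥ 1`), defined by the kernel formula
`cr_m F (X₁,…,X_m) = ker (F (X₁ ⊕ ⋯ ⊕ X_m) ⟶ ⨁_j F (X₁ ⊕ ⋯ ⊕ X_{j-1} ⊕ X_{j+1} ⊕ ⋯ ⊕ X_m))`.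
-/

open CategoryTheory CategoryTheory.Limits ZeroObject

attribute [local instance] CategoryTheory.Abelian.hasFiniteBiproducts

universe v u v' u'

variable {B : Type u} [Category.{v} B] [Abelian B]
variable {A : Type u'} [Category.{v'} A] [Abelian A]

/-- The map induced on `(n+1)`-st cross effects by a natural transformation. -/
noncomputable def crObjMapNat (n : ℕ) {F G : B ⥤ A} (α : F ⟶ G) (X : Fin (n + 1) → B) :
    crObj n F X ⟶ crObj n G X :=
  kernel.map (biproduct.lift fun j : Fin (n + 1) => F.map (collapse X j))
    (biproduct.lift fun j : Fin (n + 1) => G.map (collapse X j))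
    (α.app (⨁ X)) (biproduct.map fun j => α.app (⨁ (X ∘ j.succAbove)))
    (by ext j; simp)

/-!
The Eilenberg–MacLane alternating sum `e_F = ∑_S (-1)^|S| F(q_S)`, where `q_S` is the idempotent
of `X₀ ⊕ ⋯ ⊕ Xₙ` killing the summands indexed by `S`, is natural in `F`, vanishes after
`F` of every collapse map, and restricts to the identity on the cross effect. Hence `cr F (X)`
is a retract of `F (⨁ X)` naturally in `F`, and a retract of a short exact sequence is short
exact.
-/

namespace CategoryTheory.ShortComplex

lemma ShortExact.of_retract {C : Type*} [Category C] [HasZeroMorphisms C]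
    [CategoryWithHomology C] {S T : ShortComplex C} (h : Retract S T) (hT : T.ShortExact) :
    S.ShortExact where
  exact := by
    rw [exact_iff_isZero_homology]
    have : Mono (homologyMap h.i) := (h.map (homologyFunctor C)).splitMono.mono
    exact IsZero.of_mono (homologyMap h.i) (T.exact_iff_isZero_homology.1 hT.exact)
  mono_f := by
    have := hT.mono_f
    have : Mono h.i.τ₁ := (h.map π₁).splitMono.mono
    have : Mono (S.f ≫ h.i.τ₂) := by rw [← h.i.comm₁₂]; infer_instance
    exact mono_of_mono _ h.i.τ₂
  epi_g := by
    have := hT.epi_g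
    have : Epi h.r.τ₃ := (h.map π₃).splitEpi.epi
    have : Epi (h.r.τ₂ ≫ S.g) := by rw [h.r.comm₂₃]; infer_instance
    exact epi_of_epi h.r.τ₂ _

end CategoryTheory.ShortComplex

namespace CrossEffect

section Idempotent

variable {C : Type*} [Category C] [Preadditive C] [HasFiniteBiproducts C]
  {D : Type*} [Category D] [Preadditive D] {ι : Type*} [Fintype ι] [DecidableEq ι]

noncomputable def killSummands (X : ι → C) (S : Finset ι) : (⨁ X) ⟶ ⨁ X :=
  biproduct.lift fun k => if k ∈ S then 0 else biproduct.π X k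

@[simp]
lemma killSummands_π (X : ι → C) (S : Finset ι) (k : ι) :
    killSummands X S ≫ biproduct.π X k = if k ∈ S then 0 else biproduct.π X k :=
  biproduct.lift_π _ _

@[simp]
lemma killSummands_empty (X : ι → C) : killSummands X ∅ = 𝟙 _ := by
  ext k; simp

@[simp]
lemma killSummands_comp_killSummands (X : ι → C) (S T : Finset ι) :
    killSummands X S ≫ killSummands X T = killSummands X (S ∪ T) := by
  ext k
  by_cases hS : k ∈ S <;> by_cases hT : k ∈ T <;> simp [hS, hT]

lemma killSummands_singleton (X : ι → C) (j : ι) :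
    killSummands X {j} = 𝟙 _ - biproduct.π X j ≫ biproduct.ι X j := by
  ext k
  rcases eq_or_ne k j with rfl | hkj
  · simp
  · simp [hkj, biproduct.ι_π_ne X hkj.symm]

noncomputable def crossEffectProj (F : C ⥤ D) (X : ι → C) : F.obj (⨁ X) ⟶ F.obj (⨁ X) :=
  ∑ S ∈ Finset.univ.powerset, (-1 : ℤ) ^ S.card • F.map (killSummands X S)

/-- Splitting the subsets `S` by whether they contain `j`, the terms for `S` and `insert j S`
cancel. -/
lemma crossEffectProj_comp_map_killSummands_singleton (F : C ⥤ D) (X : ι → C) (j : ι) :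
    crossEffectProj F X ≫ F.map (killSummands X {j}) = 0 := by
  rw [crossEffectProj, Preadditive.sum_comp, ← Finset.insert_erase (Finset.mem_univ j),
    Finset.sum_powerset_insert (Finset.notMem_erase j _), ← Finset.sum_add_distrib]
  refine Finset.sum_eq_zero fun t ht => ?_
  have hj : j ∉ t := fun h => Finset.notMem_erase j _ (Finset.mem_powerset.1 ht h)
  simp only [Preadditive.zsmul_comp, ← F.map_comp, killSummands_comp_killSummands,
    Finset.union_comm _ {j}, ← Finset.insert_eq, Finset.insert_idem]
  rw [Finset.card_insert_of_notMem hj, pow_succ, mul_neg_one, neg_smul, add_neg_cancel]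

lemma crossEffectProj_natural {F G : C ⥤ D} (α : F ⟶ G) (X : ι → C) :
    crossEffectProj F X ≫ α.app (⨁ X) = α.app (⨁ X) ≫ crossEffectProj G X := by
  simp only [crossEffectProj, Preadditive.sum_comp, Preadditive.comp_sum,
    Preadditive.zsmul_comp, Preadditive.comp_zsmul, α.naturality]

end Idempotent

variable {n : ℕ}

lemma collapse_comp_desc (X : Fin (n + 1) → B) (j : Fin (n + 1)) :
    collapse X j ≫ biproduct.desc (fun m => biproduct.ι X (j.succAbove m)) =
      killSummands X {j} := by
  rw [killSummands_singleton, collapse, biproduct.lift_desc, eq_sub_iff_add_eq',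
    ← biproduct.total]
  exact (Fin.sum_univ_succAbove (fun k => biproduct.π X k ≫ biproduct.ι X k) j).symm

lemma killSummands_singleton_comp_collapse (X : Fin (n + 1) → B) (j : Fin (n + 1)) :
    killSummands X {j} ≫ collapse X j = collapse X j := by
  ext m
  simp [collapse, Fin.succAbove_ne j m]

noncomputable abbrev collapseMap (F : B ⥤ A) (X : Fin (n + 1) → B) :
    F.obj (⨁ X) ⟶ ⨁ fun j : Fin (n + 1) => F.obj (⨁ (X ∘ j.succAbove)) :=
  biproduct.lift fun j => F.map (collapse X j)

noncomputable def crObjι (F : B ⥤ A) (X : Fin (n + 1) → B) : crObj n F X ⟶ F.obj (⨁ X) :=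
  kernel.ι (collapseMap F X)

instance (F : B ⥤ A) (X : Fin (n + 1) → B) : Mono (crObjι F X) :=
  inferInstanceAs (Mono (kernel.ι _))

lemma crObjι_comp_map_collapse (F : B ⥤ A) (X : Fin (n + 1) → B) (j : Fin (n + 1)) :
    crObjι F X ≫ F.map (collapse X j) = 0 := by
  have h := kernel.condition (collapseMap F X) =≫ biproduct.π _ j
  rwa [Category.assoc, biproduct.lift_π, zero_comp] at h

lemma crObjι_comp_crossEffectProj (F : B ⥤ A) (X : Fin (n + 1) → B) :
    crObjι F X ≫ crossEffectProj F X = crObjι F X := by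
  rw [crossEffectProj, Preadditive.comp_sum,
    Finset.sum_eq_single_of_mem ∅ (Finset.empty_mem_powerset _)]
  · simp
  intro S _ hS
  obtain ⟨j, hj⟩ := Finset.nonempty_iff_ne_empty.2 hS
  have hfactor : killSummands X S = collapse X j ≫
      biproduct.desc (fun m => biproduct.ι X (j.succAbove m)) ≫ killSummands X S := by
    rw [← Category.assoc, collapse_comp_desc, killSummands_comp_killSummands,
      ← Finset.insert_eq, Finset.insert_eq_of_mem hj]
  rw [Preadditive.comp_zsmul, hfactor, F.map_comp, ← Category.assoc,
    crObjι_comp_map_collapse, zero_comp, smul_zero]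

lemma crossEffectProj_comp_collapseMap (F : B ⥤ A) (X : Fin (n + 1) → B) :
    crossEffectProj F X ≫ collapseMap F X = 0 := by
  ext j
  rw [Category.assoc, biproduct.lift_π, zero_comp, ← killSummands_singleton_comp_collapse,
    F.map_comp, ← Category.assoc, crossEffectProj_comp_map_killSummands_singleton, zero_comp]

noncomputable def crRetraction (F : B ⥤ A) (X : Fin (n + 1) → B) :
    F.obj (⨁ X) ⟶ crObj n F X :=
  kernel.lift _ (crossEffectProj F X) (crossEffectProj_comp_collapseMap F X)

lemma crRetraction_comp_crObjι (F : B ⥤ A) (X : Fin (n + 1) → B) :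
    crRetraction F X ≫ crObjι F X = crossEffectProj F X :=
  kernel.lift_ι _ _ _

lemma crObjι_comp_crRetraction (F : B ⥤ A) (X : Fin (n + 1) → B) :
    crObjι F X ≫ crRetraction F X = 𝟙 _ := by
  rw [← cancel_mono (crObjι F X), Category.assoc, crRetraction_comp_crObjι,
    crObjι_comp_crossEffectProj, Category.id_comp]

lemma crObjMapNat_comp_crObjι {F G : B ⥤ A} (α : F ⟶ G) (X : Fin (n + 1) → B) :
    crObjMapNat n α X ≫ crObjι G X = crObjι F X ≫ α.app (⨁ X) :=
  kernel.lift_ι _ _ _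

lemma crRetraction_comp_crObjMapNat {F G : B ⥤ A} (α : F ⟶ G) (X : Fin (n + 1) → B) :
    crRetraction F X ≫ crObjMapNat n α X = α.app (⨁ X) ≫ crRetraction G X := by
  rw [← cancel_mono (crObjι G X), Category.assoc, Category.assoc, crObjMapNat_comp_crObjι,
    crRetraction_comp_crObjι, ← Category.assoc, crRetraction_comp_crObjι,
    crossEffectProj_natural]

lemma crObjMapNat_comp_eq_zero {F G H : B ⥤ A} (α : F ⟶ G) (β : G ⟶ H)
    (X : Fin (n + 1) → B) (w : α.app (⨁ X) ≫ β.app (⨁ X) = 0) :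
    crObjMapNat n α X ≫ crObjMapNat n β X = 0 := by
  rw [← cancel_mono (crObjι H X), Category.assoc, crObjMapNat_comp_crObjι,
    ← Category.assoc, crObjMapNat_comp_crObjι, Category.assoc, w, comp_zero, zero_comp]

noncomputable def crossEffectRetract {F G H : B ⥤ A} (α : F ⟶ G) (β : G ⟶ H)
    (X : Fin (n + 1) → B) (w : α.app (⨁ X) ≫ β.app (⨁ X) = 0) :
    Retract (ShortComplex.mk _ _ (crObjMapNat_comp_eq_zero α β X w))
      (ShortComplex.mk _ _ w) where
  i :=
    { τ₁ := crObjι F X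
      τ₂ := crObjι G X
      τ₃ := crObjι H X
      comm₁₂ := (crObjMapNat_comp_crObjι α X).symm
      comm₂₃ := (crObjMapNat_comp_crObjι β X).symm }
  r :=
    { τ₁ := crRetraction F X
      τ₂ := crRetraction G X
      τ₃ := crRetraction H X
      comm₁₂ := crRetraction_comp_crObjMapNat α X
      comm₂₃ := crRetraction_comp_crObjMapNat β X }
  retract := by ext <;> exact crObjι_comp_crRetraction _ X

end CrossEffect

/-- The `(n+1)`-st cross effect is exact: an objectwise short exact sequence
`0 → F → G → H → 0` of functors induces, on every tuple `(X₀,…,Xₙ)` of objects of `ℬ`, a short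
exact sequence `0 → cr F (Xs) → cr G (Xs) → cr H (Xs) → 0` in 𝒜.  In particular the diagonal
`C_{n+1} F (X) = cr_{n+1} F (X,…,X)` is exact in `F`. -/
theorem crN_exact (n : ℕ) {F G H : B ⥤ A} (α : F ⟶ G) (β : G ⟶ H)
    (hw : ∀ X : B, α.app X ≫ β.app X = 0)
    (hse : ∀ X : B, (ShortComplex.mk (α.app X) (β.app X) (hw X)).ShortExact) :
    (∀ Xs : Fin (n + 1) → B, ∃ w : crObjMapNat n α Xs ≫ crObjMapNat n β Xs = 0,
      (ShortComplex.mk (crObjMapNat n α Xs) (crObjMapNat n β Xs) w).ShortExact) ∧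
    (∀ X : B, ∃ w : crObjMapNat n α (fun _ => X) ≫ crObjMapNat n β (fun _ => X) = 0,
      (ShortComplex.mk (crObjMapNat n α (fun _ => X)) (crObjMapNat n β (fun _ => X))
        w).ShortExact) := by
  have crN_shortExact (Xs : Fin (n + 1) → B) :
      ∃ w : crObjMapNat n α Xs ≫ crObjMapNat n β Xs = 0,
        (ShortComplex.mk (crObjMapNat n α Xs) (crObjMapNat n β Xs) w).ShortExact :=
    ⟨_, (hse (⨁ Xs)).of_retract (CrossEffect.crossEffectRetract α β Xs (hw _))⟩
  exact ⟨crN_shortExact, fun X => crN_shortExact fun _ => X⟩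
end

section
/- Let ι : A → B be a morphism of first-quadrant bicomplexes in an abelian category (so ι∘d = d∘ι and ι∘e = e∘ι), with maps f : B_{p,q} → A_{p,q} satisfying f∘d = d∘f and f∘ι = id, and maps s : B_{p,q} → B_{p,q+1} satisfying d∘s + s∘d = id − ι∘f and s∘ι = 0. Writing (−es)^k := (−1)^k (e∘s)^k and (−se)^k := (−1)^k (s∘e)^k, for every k ≥ 0 the following identities of morphisms hold (between the appropriate bigraded components): (i) e∘f∘(−es)^k + d∘f∘(−es)^{k+1} = f∘(−es)^k∘e + f∘(−es)^{k+1}∘d; (ii) e∘s∘(−es)^k + d∘s∘(−es)^{k+1} = −ι∘f∘(−es)^{k+1} − s∘d∘(−es)^{k+1}; (iii) s∘(−es)^{k+1}∘d + s∘(−es)^k∘e = −(−se)^{k+1}∘d∘s; (iv) s∘d∘(−es)^{k+1} = −(−se)^{k+1}∘d∘s. -/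
/-!
Statement 18: Let `ι : A → B` be a morphism of first-quadrant bicomplexes in an abelian
category (`ι` commutes with both differentials), with maps `f : B_{p,q} → A_{p,q}` satisfying
`f ∘ d = d ∘ f` and `f ∘ ι = id`, and maps `s : B_{p,q} → B_{p,q+1}` satisfying
`d ∘ s + s ∘ d = id − ι ∘ f` and `s ∘ ι = 0` (with the convention that `d` out of the zeroth
column and `s` into it are zero).  Writing `(−es)^k := (−1)^k (e ∘ s)^k` and
`(−se)^k := (−1)^k (s ∘ e)^k`, for every `k ≥ 0` the following identities hold between the
appropriate bigraded components (the boundary cases at `q = 0`, where the leading horizontal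
differential vanishes by convention, are stated separately):
(i)   `e f (−es)^k + d f (−es)^{k+1} = f (−es)^k e + f (−es)^{k+1} d`;
(ii)  `e s (−es)^k + d s (−es)^{k+1} = −ι f (−es)^{k+1} − s d (−es)^{k+1}`;
(iii) `s (−es)^{k+1} d + s (−es)^k e = −(−se)^{k+1} d s`;
(iv)  `s d (−es)^{k+1} = −(−se)^{k+1} d s`.
-/

open CategoryTheory CategoryTheory.Limits

attribute [local instance] CategoryTheory.Abelian.hasFiniteBiproducts
attribute [local instance] CategoryTheory.Limits.hasBinaryBiproducts_of_finite_biproducts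

universe v u

variable (A : Type u) [Category.{v} A] [Abelian A]

/-- A first-quadrant bicomplex: objects `X p q` for `p, q ≥ 0`, horizontal differentials
`d : X p (q+1) ⟶ X p q`, vertical differentials `e : X (p+1) q ⟶ X p q`, with `d² = 0`,
`e² = 0` and anticommuting squares. -/
structure Bicomplex where
  X : ℕ → ℕ → A
  d : ∀ p q, X p (q + 1) ⟶ X p q
  e : ∀ p q, X (p + 1) q ⟶ X p q
  dd : ∀ p q, d p (q + 1) ≫ d p q = 0
  ee : ∀ p q, e (p + 1) q ≫ e p q = 0
  anticomm : ∀ p q, d (p + 1) q ≫ e p q + e p (q + 1) ≫ d p q = 0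

variable {A}

/-- The iterated diagonal map `(e ∘ s)^k : X_{c+k, b} ⟶ X_{c, b+k}` of a bicomplex (each
factor applies `s` and then `e`), with flexible indexing via the proofs `a = c + k`,
`d = b + k`. -/
noncomputable def esPow (Cb : Bicomplex A) (s : ∀ p q, Cb.X p q ⟶ Cb.X p (q + 1)) :
    ∀ (k a b c d : ℕ), a = c + k → d = b + k → (Cb.X a b ⟶ Cb.X c d)
  | 0, a, b, c, d, ha, hd => eqToHom (congrArg₂ Cb.X (by omega) (by omega))
  | k + 1, a, b, c, d, ha, hd =>
      esPow Cb s k a b (c + 1) (b + k) (by omega) rfl ≫ s (c + 1) (b + k) ≫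
        Cb.e c (b + k + 1) ≫ eqToHom (congrArg₂ Cb.X rfl (by omega))

/-- The iterated diagonal map `(s ∘ e)^k : X_{c+k, b} ⟶ X_{c, b+k}` of a bicomplex (each
factor applies `e` and then `s`), with flexible indexing. -/
noncomputable def sePow (Cb : Bicomplex A) (s : ∀ p q, Cb.X p q ⟶ Cb.X p (q + 1)) :
    ∀ (k a b c d : ℕ), a = c + k → d = b + k → (Cb.X a b ⟶ Cb.X c d)
  | 0, a, b, c, d, ha, hd => eqToHom (congrArg₂ Cb.X (by omega) (by omega))
  | k + 1, a, b, c, d, ha, hd =>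
      sePow Cb s k a b (c + 1) (b + k) (by omega) rfl ≫ Cb.e c (b + k) ≫
        s c (b + k) ≫ eqToHom (congrArg₂ Cb.X rfl (by omega))

/-- `(−es)^k := (−1)^k (e ∘ s)^k`. -/
noncomputable def negES (Cb : Bicomplex A) (s : ∀ p q, Cb.X p q ⟶ Cb.X p (q + 1))
    (k a b c d : ℕ) (ha : a = c + k) (hd : d = b + k) : Cb.X a b ⟶ Cb.X c d :=
  ((-1 : ℤ) ^ k) • esPow Cb s k a b c d ha hd

/-- `(−se)^k := (−1)^k (s ∘ e)^k`. -/
noncomputable def negSE (Cb : Bicomplex A) (s : ∀ p q, Cb.X p q ⟶ Cb.X p (q + 1))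
    (k a b c d : ℕ) (ha : a = c + k) (hd : d = b + k) : Cb.X a b ⟶ Cb.X c d :=
  ((-1 : ℤ) ^ k) • sePow Cb s k a b c d ha hd

/-!
In diagrammatic order (as `≫`), let `T = s ≫ e` and `π = f ≫ ι`. The homotopy relation
`s ≫ d + d ≫ s = 1 - π` together with `e ≫ d = -(d ≫ e)` gives `T ≫ d = d ≫ T - e + π ≫ e`,
and `T ≫ d = -e + π ≫ e` on the bottom row, where no `d` comes in. Pushing `d` through
`T^(k+1)` one factor at a time, the cross terms vanish because `T ≫ e = 0` (as `e ≫ e = 0`)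
and `π ≫ e ≫ s = 0` (as `ι ≫ s = 0`), so `T^(k+1) ≫ d = d ≫ T^(k+1) - e ≫ T^k + T^k ≫ π ≫ e`,
without the first term on the bottom row. The same bookkeeping gives
`T^(k+1) ≫ d ≫ s = -(s ≫ d ≫ (e ≫ s)^(k+1))`, and the identities are linear combinations of
these two formulas, `f ≫ d = d ≫ f` and `ι ≫ e ≫ f = e`.
-/

section DiagonalPowers

variable {Cb : Bicomplex A} (s : ∀ p q, Cb.X p q ⟶ Cb.X p (q + 1))
  (π : ∀ p q, Cb.X p q ⟶ Cb.X p q)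

theorem esPow_succ (k a b c m : ℕ) (ha : a = c + k + 1) (hm : m = b + k) :
    esPow Cb s (k + 1) a b c (m + 1) (by omega) (by omega) =
      esPow Cb s k a b (c + 1) m (by omega) hm ≫ s (c + 1) m ≫ Cb.e c (m + 1) := by
  subst hm
  simp [esPow]

theorem sePow_succ (k a b c m : ℕ) (ha : a = c + k + 1) (hm : m = b + k) :
    sePow Cb s (k + 1) a b c (m + 1) (by omega) (by omega) =
      sePow Cb s k a b (c + 1) m (by omega) hm ≫ Cb.e c m ≫ s c m := by
  subst hm
  simp [sePow]

theorem esPow_succ_comp_e (k a b c m : ℕ) (ha : a = c + k + 2) (hm : m = b + k) :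
    esPow Cb s (k + 1) a b (c + 1) (m + 1) (by omega) (by omega) ≫ Cb.e c (m + 1) = 0 := by
  simp [esPow_succ s k a b (c + 1) m (by omega) hm, Cb.ee]

theorem s_comp_e_comp_d
    (hs : ∀ p q, s p (q + 1) ≫ Cb.d p (q + 1) + Cb.d p q ≫ s p q = 𝟙 _ - π p (q + 1))
    (c m : ℕ) :
    s (c + 1) (m + 1) ≫ Cb.e c (m + 1 + 1) ≫ Cb.d c (m + 1) =
      Cb.d (c + 1) m ≫ s (c + 1) m ≫ Cb.e c (m + 1) - Cb.e c (m + 1) +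
        π (c + 1) (m + 1) ≫ Cb.e c (m + 1) := by
  have hsd := eq_sub_of_add_eq (hs (c + 1) m)
  rw [eq_neg_of_add_eq_zero_right (Cb.anticomm c (m + 1)), Preadditive.comp_neg,
    ← Category.assoc, hsd]
  simp only [Preadditive.sub_comp, Category.id_comp, Category.assoc]
  abel

theorem s_comp_e_comp_d_zero (hs0 : ∀ p, s p 0 ≫ Cb.d p 0 = 𝟙 _ - π p 0) (c : ℕ) :
    s (c + 1) 0 ≫ Cb.e c 1 ≫ Cb.d c 0 = -Cb.e c 0 + π (c + 1) 0 ≫ Cb.e c 0 := by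
  rw [eq_neg_of_add_eq_zero_right (Cb.anticomm c 0), Preadditive.comp_neg,
    ← Category.assoc, hs0]
  simp only [Preadditive.sub_comp, Category.id_comp]
  abel

/-- `g` will be `d ≫ T^(k+1)` above the bottom row and `0` on it. -/
theorem esPow_succ_succ_comp_d
    (hs : ∀ p q, s p (q + 1) ≫ Cb.d p (q + 1) + Cb.d p q ≫ s p q = 𝟙 _ - π p (q + 1))
    (hπ : ∀ p q, π (p + 1) q ≫ Cb.e p q ≫ s p q = 0)
    (k a b c m : ℕ) (ha : a = c + k + 1) (hm : m = b + k)
    (g : Cb.X (a + 1) b ⟶ Cb.X (c + 1) m)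
    (h : esPow Cb s (k + 1) (a + 1) b (c + 1) (m + 1) (by omega) (by omega) ≫ Cb.d (c + 1) m =
      g - Cb.e a b ≫ esPow Cb s k a b (c + 1) m (by omega) (by omega) +
        esPow Cb s k (a + 1) b (c + 1 + 1) m (by omega) (by omega) ≫
          π (c + 1 + 1) m ≫ Cb.e (c + 1) m) :
    esPow Cb s (k + 1 + 1) (a + 1) b c (m + 1 + 1) (by omega) (by omega) ≫ Cb.d c (m + 1) =
      g ≫ s (c + 1) m ≫ Cb.e c (m + 1) -
        Cb.e a b ≫ esPow Cb s (k + 1) a b c (m + 1) (by omega) (by omega) +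
        esPow Cb s (k + 1) (a + 1) b (c + 1) (m + 1) (by omega) (by omega) ≫
          π (c + 1) (m + 1) ≫ Cb.e c (m + 1) := by
  rw [esPow_succ s (k + 1) (a + 1) b c (m + 1) (by omega) (by omega), Category.assoc,
    Category.assoc, s_comp_e_comp_d s π hs, Preadditive.comp_add, Preadditive.comp_sub,
    reassoc_of% h, esPow_succ s k a b c m (by omega) hm,
    esPow_succ_comp_e s k (a + 1) b c m (by omega) hm]
  simp only [Preadditive.add_comp, Preadditive.sub_comp, Category.assoc, reassoc_of% hπ,
    zero_comp, comp_zero]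
  abel

theorem esPow_succ_comp_d
    (hs : ∀ p q, s p (q + 1) ≫ Cb.d p (q + 1) + Cb.d p q ≫ s p q = 𝟙 _ - π p (q + 1))
    (hπ : ∀ p q, π (p + 1) q ≫ Cb.e p q ≫ s p q = 0) (q : ℕ) :
    ∀ k a c m (ha : a = c + k) (hm : m = q + 1 + k),
      esPow Cb s (k + 1) (a + 1) (q + 1) c (m + 1) (by omega) (by omega) ≫ Cb.d c m =
        Cb.d (a + 1) q ≫ esPow Cb s (k + 1) (a + 1) q c m (by omega) (by omega) -
          Cb.e a (q + 1) ≫ esPow Cb s k a (q + 1) c m ha hm +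
          esPow Cb s k (a + 1) (q + 1) (c + 1) m (by omega) hm ≫ π (c + 1) m ≫ Cb.e c m
  | 0, a, c, m, ha, hm => by
    obtain rfl : a = c := ha
    obtain rfl : m = q + 1 := hm
    simpa [esPow] using s_comp_e_comp_d s π hs a q
  | k + 1, a, c, m, ha, hm => by
    obtain rfl : a = c + k + 1 := ha
    obtain rfl : m = q + 1 + k + 1 := hm
    rw [esPow_succ_succ_comp_d s π hs hπ k (c + k + 1) (q + 1) c (q + 1 + k) (by omega)
      (by omega) _ (esPow_succ_comp_d hs hπ q k (c + k + 1) (c + 1) (q + 1 + k) (by omega) rfl),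
      Category.assoc, ← esPow_succ]

theorem esPow_succ_comp_d_zero (hs0 : ∀ p, s p 0 ≫ Cb.d p 0 = 𝟙 _ - π p 0)
    (hs : ∀ p q, s p (q + 1) ≫ Cb.d p (q + 1) + Cb.d p q ≫ s p q = 𝟙 _ - π p (q + 1))
    (hπ : ∀ p q, π (p + 1) q ≫ Cb.e p q ≫ s p q = 0) :
    ∀ k a c (ha : a = c + k),
      esPow Cb s (k + 1) (a + 1) 0 c (k + 1) (by omega) (by omega) ≫ Cb.d c k =
        -(Cb.e a 0 ≫ esPow Cb s k a 0 c k ha (by omega)) +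
          esPow Cb s k (a + 1) 0 (c + 1) k (by omega) (by omega) ≫ π (c + 1) k ≫ Cb.e c k
  | 0, a, c, ha => by
    obtain rfl : a = c := ha
    simpa [esPow] using s_comp_e_comp_d_zero s π hs0 a
  | k + 1, a, c, ha => by
    obtain rfl : a = c + k + 1 := ha
    have ih := esPow_succ_comp_d_zero hs0 hs hπ k (c + k + 1) (c + 1) (by omega)
    rw [esPow_succ_succ_comp_d s π hs hπ k (c + k + 1) 0 c k (by omega) (by omega) 0
      (by rw [ih, zero_sub]), zero_comp, zero_sub]

theorem esPow_succ_comp_d_comp_s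
    (hs : ∀ p q, s p (q + 1) ≫ Cb.d p (q + 1) + Cb.d p q ≫ s p q = 𝟙 _ - π p (q + 1))
    (hπ : ∀ p q, π (p + 1) q ≫ Cb.e p q ≫ s p q = 0) :
    ∀ k a b c m (ha : a = c + k + 1) (hm : m = b + k),
      esPow Cb s (k + 1) a b c (m + 1) (by omega) (by omega) ≫ Cb.d c m ≫ s c m =
        -(s a b ≫ Cb.d a b ≫ sePow Cb s (k + 1) a b c (m + 1) (by omega) (by omega))
  | 0, a, b, c, m, ha, hm => by
    obtain rfl : a = c + 1 := ha
    obtain rfl : m = b := hm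
    simp [esPow, sePow, reassoc_of% eq_neg_of_add_eq_zero_right (Cb.anticomm c m)]
  | k + 1, a, b, c, m, ha, hm => by
    obtain rfl : a = c + k + 1 + 1 := ha
    obtain rfl : m = b + k + 1 := hm
    rw [esPow_succ s (k + 1) _ b c (b + k + 1) (by omega) rfl,
      sePow_succ s (k + 1) _ b c (b + k + 1) (by omega) rfl, Category.assoc, Category.assoc,
      reassoc_of% s_comp_e_comp_d s π hs]
    simp only [Preadditive.add_comp, Preadditive.sub_comp, Preadditive.comp_sub,
      Preadditive.neg_comp, Category.assoc, hπ, zero_comp, sub_zero, add_zero,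
      reassoc_of% esPow_succ_comp_e s k (c + k + 1 + 1) b c (b + k) (by omega) rfl,
      reassoc_of% esPow_succ_comp_d_comp_s hs hπ k (c + k + 1 + 1) b (c + 1) (b + k) (by omega) rfl]

theorem d_comp_esPow_succ_comp_s
    (hs : ∀ p q, s p (q + 1) ≫ Cb.d p (q + 1) + Cb.d p q ≫ s p q = 𝟙 _ - π p (q + 1))
    (hπ : ∀ p q, π (p + 1) q ≫ Cb.e p q ≫ s p q = 0)
    (q k a c m : ℕ) (ha : a = c + k) (hm : m = q + 1 + k) :
    Cb.d (a + 1) q ≫ esPow Cb s (k + 1) (a + 1) q c m (by omega) (by omega) ≫ s c m =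
      Cb.e a (q + 1) ≫ esPow Cb s k a (q + 1) c m ha hm ≫ s c m -
        s (a + 1) (q + 1) ≫ Cb.d (a + 1) (q + 1) ≫
          sePow Cb s (k + 1) (a + 1) (q + 1) c (m + 1) (by omega) (by omega) := by
  have h := esPow_succ_comp_d s π hs hπ q k a c m ha hm =≫ s c m
  simp only [Preadditive.add_comp, Preadditive.sub_comp, Category.assoc, hπ, comp_zero,
    add_zero] at h
  rw [esPow_succ_comp_d_comp_s s π hs hπ k (a + 1) (q + 1) c m (by omega) hm] at h
  rw [eq_sub_iff_add_eq] at h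
  rw [← h, neg_add_eq_sub]

theorem e_comp_esPow_comp_s_zero (hs0 : ∀ p, s p 0 ≫ Cb.d p 0 = 𝟙 _ - π p 0)
    (hs : ∀ p q, s p (q + 1) ≫ Cb.d p (q + 1) + Cb.d p q ≫ s p q = 𝟙 _ - π p (q + 1))
    (hπ : ∀ p q, π (p + 1) q ≫ Cb.e p q ≫ s p q = 0) (k a c : ℕ) (ha : a = c + k) :
    Cb.e a 0 ≫ esPow Cb s k a 0 c k ha (by omega) ≫ s c k =
      s (a + 1) 0 ≫ Cb.d (a + 1) 0 ≫
        sePow Cb s (k + 1) (a + 1) 0 c (k + 1) (by omega) (by omega) := by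
  have h := esPow_succ_comp_d_zero s π hs0 hs hπ k a c ha =≫ s c k
  simp only [Preadditive.add_comp, Preadditive.neg_comp, Category.assoc, hπ, comp_zero,
    add_zero] at h
  rw [esPow_succ_comp_d_comp_s s π hs hπ k (a + 1) 0 c k (by omega) (by omega)] at h
  exact neg_injective h.symm

end DiagonalPowers

/-- **Statement 18.** The four families of identities (with their `q = 0` boundary variants
for (i) and (iii)) satisfied by the data of a row-wise strong deformation retraction of a
morphism of first-quadrant bicomplexes. -/
theorem bicomplex_retraction_identities {Ca Cb : Bicomplex A}
    (ι : ∀ p q, Ca.X p q ⟶ Cb.X p q)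
    (hιe : ∀ p q, ι (p + 1) q ≫ Cb.e p q = Ca.e p q ≫ ι p q)
    (f : ∀ p q, Cb.X p q ⟶ Ca.X p q)
    (hfd : ∀ p q, f p (q + 1) ≫ Ca.d p q = Cb.d p q ≫ f p q)
    (hfι : ∀ p q, ι p q ≫ f p q = 𝟙 (Ca.X p q))
    (s : ∀ p q, Cb.X p q ⟶ Cb.X p (q + 1))
    (hs0 : ∀ p, s p 0 ≫ Cb.d p 0 = 𝟙 (Cb.X p 0) - f p 0 ≫ ι p 0)
    (hs : ∀ p q, s p (q + 1) ≫ Cb.d p (q + 1) + Cb.d p q ≫ s p q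
      = 𝟙 (Cb.X p (q + 1)) - f p (q + 1) ≫ ι p (q + 1))
    (hsι : ∀ p q, ι p q ≫ s p q = 0) :
    -- (i)
    (∀ p q k,
      negES Cb s k (p + k + 1) (q + 1) (p + 1) (q + k + 1) (by omega) (by omega) ≫
          f (p + 1) (q + k + 1) ≫ Ca.e p (q + k + 1)
        + negES Cb s (k + 1) (p + k + 1) (q + 1) p (q + k + 2) (by omega) (by omega) ≫
          f p (q + k + 2) ≫ Ca.d p (q + k + 1)
      = Cb.e (p + k) (q + 1) ≫
          negES Cb s k (p + k) (q + 1) p (q + k + 1) (by omega) (by omega) ≫ f p (q + k + 1)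
        + Cb.d (p + k + 1) q ≫
          negES Cb s (k + 1) (p + k + 1) q p (q + k + 1) (by omega) (by omega) ≫
          f p (q + k + 1)) ∧
    -- (i), boundary case q = 0
    (∀ p k,
      negES Cb s k (p + k + 1) 0 (p + 1) k (by omega) (by omega) ≫ f (p + 1) k ≫ Ca.e p k
        + negES Cb s (k + 1) (p + k + 1) 0 p (k + 1) (by omega) (by omega) ≫
          f p (k + 1) ≫ Ca.d p k
      = Cb.e (p + k) 0 ≫ negES Cb s k (p + k) 0 p k (by omega) (by omega) ≫ f p k) ∧
    -- (ii)
    (∀ p q k,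
      negES Cb s k (p + k + 1) q (p + 1) (q + k) (by omega) (by omega) ≫
          s (p + 1) (q + k) ≫ Cb.e p (q + k + 1)
        + negES Cb s (k + 1) (p + k + 1) q p (q + k + 1) (by omega) (by omega) ≫
          s p (q + k + 1) ≫ Cb.d p (q + k + 1)
      = -(negES Cb s (k + 1) (p + k + 1) q p (q + k + 1) (by omega) (by omega) ≫
          f p (q + k + 1) ≫ ι p (q + k + 1))
        - negES Cb s (k + 1) (p + k + 1) q p (q + k + 1) (by omega) (by omega) ≫
          Cb.d p (q + k) ≫ s p (q + k)) ∧
    -- (iii)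
    (∀ p q k,
      Cb.d (p + k + 1) q ≫
          negES Cb s (k + 1) (p + k + 1) q p (q + k + 1) (by omega) (by omega) ≫
          s p (q + k + 1)
        + Cb.e (p + k) (q + 1) ≫
          negES Cb s k (p + k) (q + 1) p (q + k + 1) (by omega) (by omega) ≫ s p (q + k + 1)
      = -(s (p + k + 1) (q + 1) ≫ Cb.d (p + k + 1) (q + 1) ≫
          negSE Cb s (k + 1) (p + k + 1) (q + 1) p (q + k + 2) (by omega) (by omega))) ∧
    -- (iii), boundary case q = 0
    (∀ p k,
      Cb.e (p + k) 0 ≫ negES Cb s k (p + k) 0 p k (by omega) (by omega) ≫ s p k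
      = -(s (p + k + 1) 0 ≫ Cb.d (p + k + 1) 0 ≫
          negSE Cb s (k + 1) (p + k + 1) 0 p (k + 1) (by omega) (by omega))) ∧
    -- (iv)
    (∀ p q k,
      negES Cb s (k + 1) (p + k + 1) q p (q + k + 1) (by omega) (by omega) ≫
          Cb.d p (q + k) ≫ s p (q + k)
      = -(s (p + k + 1) q ≫ Cb.d (p + k + 1) q ≫
          negSE Cb s (k + 1) (p + k + 1) q p (q + k + 1) (by omega) (by omega))) := by
  let π : ∀ p q, Cb.X p q ⟶ Cb.X p q := fun p q => f p q ≫ ι p q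
  have hπ : ∀ p q, π (p + 1) q ≫ Cb.e p q ≫ s p q = 0 := fun p q => by
    simp only [π, Category.assoc, reassoc_of% hιe, hsι, comp_zero]
  have hπf : ∀ p q, π (p + 1) q ≫ Cb.e p q ≫ f p q = f (p + 1) q ≫ Ca.e p q := fun p q => by
    simp only [π, Category.assoc, reassoc_of% hιe, hfι, Category.comp_id]
  refine ⟨fun p q k => ?_, fun p k => ?_, fun p q k => ?_, fun p q k => ?_, fun p k => ?_,
    fun p q k => ?_⟩ <;>
    simp only [negES, negSE, Preadditive.zsmul_comp, Preadditive.comp_zsmul]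
  · rw [hfd, reassoc_of% esPow_succ_comp_d s π hs hπ q k (p + k) p (q + k + 1) (by omega)
      (by omega)]
    simp only [Preadditive.add_comp, Preadditive.sub_comp, Category.assoc, hπf]
    module
  · rw [hfd, reassoc_of% esPow_succ_comp_d_zero s π hs0 hs hπ k (p + k) p (by omega)]
    simp only [Preadditive.add_comp, Preadditive.neg_comp, Category.assoc, hπf]
    module
  · rw [← esPow_succ s k (p + k + 1) q p (q + k) (by omega) (by omega),
      eq_sub_of_add_eq (hs p (q + k))]
    simp only [Preadditive.comp_sub, Category.comp_id]
    module
  · rw [d_comp_esPow_succ_comp_s s π hs hπ q k (p + k) p (q + k + 1) (by omega) (by omega)]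
    module
  · rw [e_comp_esPow_comp_s_zero s π hs0 hs hπ k (p + k) p (by omega)]
    module
  · rw [esPow_succ_comp_d_comp_s s π hs hπ k (p + k + 1) q p (q + k) (by omega) rfl]
    module
end
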